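/- In flat Euclidean ℝⁿ (n ≥ 3), if a local diffeomorphism f: U → ℝⁿ maps every straight line and every round circle (i.e., every conformal circle of the flat metric) into a straight line or round circle, and df never annihilates the stated orthogonality structure, then for each point x and each pair of orthogonal vectors v ⊥ u in ℝⁿ one has ⟨df_x(v), df_x(u)⟩ = 0; hence df_x is a conformal linear map at every point. -/

import Mathlib

/-!
Equation (1) characterises the flat conformal circles by their third derivative: for a curve
with velocity `s`, acceleration `a` and third derivative `j`, the component of `j` normal to
`s` is `3⟪a, s⟫ / ‖s‖²` times that of `a`. On a line all three are parallel to the line; on a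
circle of centre `c` the identity comes from differentiating `‖σ - c‖² = R²` three times,
everything taking place in the plane of the circle.

Fix `x` and orthonormal `v, u`, and let `A = Df(x)`. The line `x + t • v` and the circles
`x + sin t • v ± (1 - cos t) • u` pass through `x` with velocity `v` and accelerations `0`,
`±u`; their images under `f` lie on lines or circles, so they satisfy (1) at `x` with velocity
`A v` and accelerations `D²f(x)(v, v)`, `D²f(x)(v, v) ± A u`. Equation (1) is affine in the
third derivative and quadratic in the acceleration, so `2·(line) - (+) - (-)` removes every
higher derivative of `f` and leaves `⟪A u, A v⟫ • normalPart (A v) (A u) = 0`; the normal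
part is nonzero because `A` is injective. Thus `A` preserves orthogonality, and an injective
linear map that does is a positive multiple of an isometry, since `‖w‖ = ‖w'‖` iff
`w + w' ⊥ w - w'`.
-/

open scoped RealInnerProductSpace

/-- Conformal circles of flat ℝⁿ: straight lines and round planar circles. -/
def IsFlatConformalCircle {n : ℕ} (C : Set (EuclideanSpace ℝ (Fin n))) : Prop :=
  (∃ p v : EuclideanSpace ℝ (Fin n), v ≠ 0 ∧ C = Set.range fun t : ℝ => p + t • v) ∨
  (∃ (c u₁ u₂ : EuclideanSpace ℝ (Fin n)) (R : ℝ), 0 < R ∧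
    ⟪u₁, u₁⟫ = 1 ∧ ⟪u₂, u₂⟫ = 1 ∧ ⟪u₁, u₂⟫ = 0 ∧
    C = Set.range fun t : ℝ => c + (R * Real.cos t) • u₁ + (R * Real.sin t) • u₂)

open Filter Topology

section Calculus

variable {E : Type*} [NormedAddCommGroup E] [InnerProductSpace ℝ E]

lemma HasDerivAt.eq_zero_of_eventually_eq_const {F : Type*} [NormedAddCommGroup F]
    [NormedSpace ℝ F] {g : ℝ → F} {g' c : F} {t₀ : ℝ} (hg : HasDerivAt g g' t₀)
    (hc : ∀ᶠ t in 𝓝 t₀, g t = c) : g' = 0 :=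
  hg.unique ((hasDerivAt_const t₀ c).congr_of_eventuallyEq hc)

lemma eventually_deriv_eq_zero_of_eventually_eq_const {F : Type*} [NormedAddCommGroup F]
    [NormedSpace ℝ F] {g g' : ℝ → F} {c : F} {t₀ : ℝ}
    (hg : ∀ᶠ t in 𝓝 t₀, HasDerivAt g (g' t) t) (hc : ∀ᶠ t in 𝓝 t₀, g t = c) :
    ∀ᶠ t in 𝓝 t₀, g' t = 0 := by
  filter_upwards [hg, hc.eventually_nhds] with t hgt hct
  exact hgt.eq_zero_of_eventually_eq_const hct

lemma HasDerivAt.mem_of_eventually_sub_mem (K : Submodule ℝ E) [K.HasOrthogonalProjection]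
    {g : ℝ → E} {g' p : E} {t₀ : ℝ} (hg : HasDerivAt g g' t₀)
    (hK : ∀ᶠ t in 𝓝 t₀, g t - p ∈ K) : g' ∈ K := by
  set P := Kᗮ.starProjection
  have hP : ∀ z, P z = 0 ↔ z ∈ K := fun z => by
    rw [Submodule.starProjection_apply_eq_zero_iff, K.orthogonal_orthogonal]
  have hPg : ∀ᶠ t in 𝓝 t₀, P (g t) = P p := by
    filter_upwards [hK] with t ht
    rw [← sub_eq_zero, ← map_sub, hP]
    exact ht
  exact (hP g').1 ((P.hasFDerivAt.comp_hasDerivAt t₀ hg).eq_zero_of_eventually_eq_const hPg)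

variable {σ σ₁ σ₂ : ℝ → E} {σ₃ : E}

lemma derivs_mem_of_eventually_sub_mem (K : Submodule ℝ E) [K.HasOrthogonalProjection] {p : E}
    (hσ : ∀ᶠ t in 𝓝 0, HasDerivAt σ (σ₁ t) t) (hσ₁ : ∀ᶠ t in 𝓝 0, HasDerivAt σ₁ (σ₂ t) t)
    (hσ₂ : HasDerivAt σ₂ σ₃ 0) (hK : ∀ᶠ t in 𝓝 0, σ t - p ∈ K) :
    σ₁ 0 ∈ K ∧ σ₂ 0 ∈ K ∧ σ₃ ∈ K := by
  have h₁ : ∀ᶠ t in 𝓝 0, σ₁ t - 0 ∈ K := by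
    filter_upwards [hσ, hK.eventually_nhds] with t ht hKt
    simpa using ht.mem_of_eventually_sub_mem K hKt
  have h₂ : ∀ᶠ t in 𝓝 0, σ₂ t - 0 ∈ K := by
    filter_upwards [hσ₁, h₁.eventually_nhds] with t ht hKt
    simpa using ht.mem_of_eventually_sub_mem K hKt
  exact ⟨by simpa using h₁.self_of_nhds, by simpa using h₂.self_of_nhds,
    hσ₂.mem_of_eventually_sub_mem K h₂⟩

lemma inner_derivs_of_eventually_inner_sub_eq {c : E} {R : ℝ}
    (hσ : ∀ᶠ t in 𝓝 0, HasDerivAt σ (σ₁ t) t) (hσ₁ : ∀ᶠ t in 𝓝 0, HasDerivAt σ₁ (σ₂ t) t)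
    (hσ₂ : HasDerivAt σ₂ σ₃ 0) (hS : ∀ᶠ t in 𝓝 0, ⟪σ t - c, σ t - c⟫ = R) :
    ⟪σ 0 - c, σ₁ 0⟫ = 0 ∧ ⟪σ 0 - c, σ₂ 0⟫ + ⟪σ₁ 0, σ₁ 0⟫ = 0 ∧
      ⟪σ 0 - c, σ₃⟫ + 3 * ⟪σ₁ 0, σ₂ 0⟫ = 0 := by
  have h₁ : ∀ᶠ t in 𝓝 0, ⟪σ t - c, σ₁ t⟫ = 0 := by
    have := eventually_deriv_eq_zero_of_eventually_eq_const
      (hσ.mono fun t ht => (ht.sub_const c).inner ℝ (ht.sub_const c)) hS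
    filter_upwards [this] with t ht
    linarith [real_inner_comm (σ t - c) (σ₁ t)]
  have h₂ : ∀ᶠ t in 𝓝 0, ⟪σ t - c, σ₂ t⟫ + ⟪σ₁ t, σ₁ t⟫ = 0 := by
    have := eventually_deriv_eq_zero_of_eventually_eq_const
      ((hσ.and hσ₁).mono fun t ht => (ht.1.sub_const c).inner ℝ ht.2) h₁
    filter_upwards [this] with t ht
    linarith
  have h₃ := (((hσ.self_of_nhds.sub_const c).inner ℝ hσ₂).add
    (hσ₁.self_of_nhds.inner ℝ hσ₁.self_of_nhds)).eq_zero_of_eventually_eq_const h₂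
  exact ⟨h₁.self_of_nhds, h₂.self_of_nhds, by linarith [real_inner_comm (σ₁ 0) (σ₂ 0)]⟩

end Calculus

section CircleEquation

variable {E : Type*} [NormedAddCommGroup E] [InnerProductSpace ℝ E]

/-- `‖s‖²` times the component of `z` orthogonal to `s`. -/
def normalPart (s z : E) : E := ⟪s, s⟫ • z - ⟪z, s⟫ • s

/-- Equation (1) for a curve with velocity `s`, acceleration `a` and third derivative `j`,
multiplied by `‖s‖⁴`. -/
def ConformalCircleEq (s a j : E) : Prop :=
  ⟪s, s⟫ • normalPart s j = (3 * ⟪a, s⟫) • normalPart s a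

lemma normalPart_smul_smul (w : E) (a b : ℝ) : normalPart (a • w) (b • w) = 0 := by
  simp only [normalPart, real_inner_smul_left, real_inner_smul_right, smul_smul]
  module

lemma conformalCircleEq_of_mem_span_singleton {w s a j : E} (hs : s ∈ ℝ ∙ w)
    (ha : a ∈ ℝ ∙ w) (hj : j ∈ ℝ ∙ w) : ConformalCircleEq s a j := by
  obtain ⟨x, rfl⟩ := Submodule.mem_span_singleton.1 hs
  obtain ⟨y, rfl⟩ := Submodule.mem_span_singleton.1 ha
  obtain ⟨z, rfl⟩ := Submodule.mem_span_singleton.1 hj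
  simp only [ConformalCircleEq, normalPart_smul_smul, smul_zero]

lemma inner_self_smul_normalPart_of_mem_span_pair {u₁ u₂ s w z : E} (h₁ : ⟪u₁, u₁⟫ = 1)
    (h₂ : ⟪u₂, u₂⟫ = 1) (h₁₂ : ⟪u₁, u₂⟫ = 0) (hs : s ∈ Submodule.span ℝ {u₁, u₂})
    (hw : w ∈ Submodule.span ℝ {u₁, u₂}) (hz : z ∈ Submodule.span ℝ {u₁, u₂})
    (hws : ⟪w, s⟫ = 0) :
    ⟪w, w⟫ • normalPart s z = (⟪s, s⟫ * ⟪z, w⟫) • w := by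
  obtain ⟨a, b, rfl⟩ := Submodule.mem_span_pair.1 hs
  obtain ⟨c, d, rfl⟩ := Submodule.mem_span_pair.1 hw
  obtain ⟨e, f, rfl⟩ := Submodule.mem_span_pair.1 hz
  have h₂₁ : ⟪u₂, u₁⟫ = 0 := by rw [real_inner_comm, h₁₂]
  simp only [normalPart, inner_add_left, inner_add_right, real_inner_smul_left,
    real_inner_smul_right, h₁, h₂, h₁₂, h₂₁] at hws ⊢
  match_scalars
  · linear_combination (e * (b * d - a * c) - f * (b * c + a * d)) * hws
  · linear_combination (f * (a * c - b * d) - e * (b * c + a * d)) * hws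

variable {σ σ₁ σ₂ : ℝ → E} {σ₃ : E}

lemma conformalCircleEq_of_eventually_mem_circle {c u₁ u₂ : E} {R : ℝ} (hR : R ≠ 0)
    (h₁ : ⟪u₁, u₁⟫ = 1) (h₂ : ⟪u₂, u₂⟫ = 1) (h₁₂ : ⟪u₁, u₂⟫ = 0)
    (hσ : ∀ᶠ t in 𝓝 0, HasDerivAt σ (σ₁ t) t) (hσ₁ : ∀ᶠ t in 𝓝 0, HasDerivAt σ₁ (σ₂ t) t)
    (hσ₂ : HasDerivAt σ₂ σ₃ 0) (hplane : ∀ᶠ t in 𝓝 0, σ t - c ∈ Submodule.span ℝ {u₁, u₂})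
    (hS : ∀ᶠ t in 𝓝 0, ⟪σ t - c, σ t - c⟫ = R) : ConformalCircleEq (σ₁ 0) (σ₂ 0) σ₃ := by
  have : FiniteDimensional ℝ (Submodule.span ℝ {u₁, u₂}) :=
    FiniteDimensional.span_of_finite ℝ (Set.toFinite _)
  obtain ⟨hs, ha, hj⟩ := derivs_mem_of_eventually_sub_mem _ hσ hσ₁ hσ₂ hplane
  obtain ⟨e₁, e₂, e₃⟩ := inner_derivs_of_eventually_inner_sub_eq hσ hσ₁ hσ₂ hS
  have key := fun z (hz : z ∈ _) =>
    inner_self_smul_normalPart_of_mem_span_pair h₁ h₂ h₁₂ hs hplane.self_of_nhds hz e₁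
  apply smul_right_injective E (hS.self_of_nhds.trans_ne hR)
  dsimp only
  rw [smul_comm _ ⟪σ₁ 0, σ₁ 0⟫, key σ₃ hj, smul_comm _ (3 * _), key _ ha, smul_smul,
    smul_smul, real_inner_comm (σ 0 - c) σ₃, real_inner_comm (σ 0 - c) (σ₂ 0),
    real_inner_comm (σ₁ 0) (σ₂ 0)]
  congr 1
  linear_combination ⟪σ₁ 0, σ₁ 0⟫ ^ 2 * e₃ - 3 * ⟪σ₁ 0, σ₂ 0⟫ * ⟪σ₁ 0, σ₁ 0⟫ * e₂

lemma ConformalCircleEq.inner_smul_normalPart_eq_zero {s a b d e : E}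
    (hzero : ConformalCircleEq s b d) (hplus : ConformalCircleEq s (b + a) (d + e - s))
    (hminus : ConformalCircleEq s (b - a) (d - e - s)) :
    ⟪a, s⟫ • normalPart s a = 0 := by
  unfold ConformalCircleEq normalPart at *
  simp only [inner_add_left, inner_sub_left] at hplus hminus
  linear_combination (norm := module) (6⁻¹ : ℝ) • (2 • hzero - hplus - hminus)

lemma inner_eq_zero_of_smul_normalPart_eq_zero {F : Type*} [NormedAddCommGroup F]
    [InnerProductSpace ℝ F] {A : E →L[ℝ] F}
    (hA : Function.Injective A) {v u : E} (hu : u ≠ 0) (hvu : ⟪v, u⟫ = 0)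
    (h : ⟪A u, A v⟫ • normalPart (A v) (A u) = 0) : ⟪A u, A v⟫ = 0 := by
  rcases smul_eq_zero.1 h with h | hN
  · exact h
  have hker : A (⟪A v, A v⟫ • u - ⟪A u, A v⟫ • v) = A 0 := by
    simpa [normalPart] using hN
  have := congrArg (⟪·, u⟫) (hA hker)
  simp only [inner_sub_left, real_inner_smul_left, hvu, mul_zero, sub_zero, inner_zero_left,
    mul_eq_zero, inner_self_eq_zero, hu, or_false] at this
  rw [this, inner_zero_right]

end CircleEquation

section OrthogonalityPreserving

variable {E F : Type*} [NormedAddCommGroup E] [InnerProductSpace ℝ E] [NormedAddCommGroup F]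
  [InnerProductSpace ℝ F] (A : E →L[ℝ] F)

lemma inner_map_map_eq_zero_of_forall_norm_eq_one
    (h : ∀ v u : E, ‖v‖ = 1 → ‖u‖ = 1 → ⟪v, u⟫ = 0 → ⟪A v, A u⟫ = 0) {v u : E}
    (hvu : ⟪v, u⟫ = 0) : ⟪A v, A u⟫ = 0 := by
  rcases eq_or_ne v 0 with rfl | hv
  · simp
  rcases eq_or_ne u 0 with rfl | hu
  · simp
  have := h _ _ (norm_smul_inv_norm hv) (norm_smul_inv_norm hu)
    (by rw [real_inner_smul_left, real_inner_smul_right, hvu, mul_zero, mul_zero])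
  simpa [real_inner_smul_left, real_inner_smul_right, hv, hu] using this

lemma exists_pos_inner_map_map_eq_mul_inner (hA : Function.Injective A)
    (h : ∀ v u : E, ⟪v, u⟫ = 0 → ⟪A v, A u⟫ = 0) :
    ∃ c : ℝ, 0 < c ∧ ∀ v u : E, ⟪A v, A u⟫ = c * ⟪v, u⟫ := by
  rcases subsingleton_or_nontrivial E with hE | hE
  · exact ⟨1, one_pos, fun v u => by simp [Subsingleton.elim v 0]⟩
  have hnorm : ∀ w w' : E, ‖w‖ = ‖w'‖ → ‖A w‖ = ‖A w'‖ := fun w w' hw => by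
    rw [← real_inner_add_sub_eq_zero_iff] at hw ⊢
    simpa using h _ _ hw
  obtain ⟨w₀, hw₀⟩ := exists_norm_eq E zero_le_one
  have hk : 0 < ‖A w₀‖ := by
    refine norm_pos_iff.2 fun h0 => ?_
    have : w₀ = 0 := hA (h0.trans A.map_zero.symm)
    simp [this] at hw₀
  have hscale : ∀ w : E, ‖A w‖ = ‖A w₀‖ * ‖w‖ := fun w => by
    rcases eq_or_ne w 0 with rfl | hw
    · simp
    have := hnorm _ w₀ (by rw [norm_smul_inv_norm (𝕜 := ℝ) hw, hw₀])
    simp only [map_smul, norm_smul, RCLike.ofReal_real_eq_id, id, norm_inv, norm_norm] at this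
    rwa [inv_mul_eq_iff_eq_mul₀ (norm_ne_zero_iff.2 hw), mul_comm] at this
  refine ⟨‖A w₀‖ ^ 2, pow_pos hk 2, fun v u => ?_⟩
  rw [real_inner_eq_norm_add_mul_self_sub_norm_mul_self_sub_norm_mul_self_div_two,
    real_inner_eq_norm_add_mul_self_sub_norm_mul_self_sub_norm_mul_self_div_two v, ← map_add,
    hscale (v + u), hscale v, hscale u]
  ring

end OrthogonalityPreserving

section CompositeCurve

variable {E F : Type*} [NormedAddCommGroup E] [NormedSpace ℝ E] [NormedAddCommGroup F]
  [NormedSpace ℝ F] {f : E → F} {γ γ₁ γ₂ γ₃ : ℝ → E}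

lemma hasDerivAt_comp_curve_of_contDiffAt (hf : ContDiffAt ℝ 3 f (γ 0))
    (hγ : ∀ t, HasDerivAt γ (γ₁ t) t) (hγ₁ : ∀ t, HasDerivAt γ₁ (γ₂ t) t)
    (hγ₂ : ∀ t, HasDerivAt γ₂ (γ₃ t) t) :
    (∀ᶠ t in 𝓝 0, HasDerivAt (f ∘ γ) (fderiv ℝ f (γ t) (γ₁ t)) t) ∧
    (∀ᶠ t in 𝓝 0, HasDerivAt (fun s => fderiv ℝ f (γ s) (γ₁ s))
      (fderiv ℝ (fderiv ℝ f) (γ t) (γ₁ t) (γ₁ t) + fderiv ℝ f (γ t) (γ₂ t)) t) ∧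
    HasDerivAt
      (fun s => fderiv ℝ (fderiv ℝ f) (γ s) (γ₁ s) (γ₁ s) + fderiv ℝ f (γ s) (γ₂ s))
      (fderiv ℝ (fderiv ℝ (fderiv ℝ f)) (γ 0) (γ₁ 0) (γ₁ 0) (γ₁ 0)
        + fderiv ℝ (fderiv ℝ f) (γ 0) (γ₂ 0) (γ₁ 0)
        + fderiv ℝ (fderiv ℝ f) (γ 0) (γ₁ 0) (γ₂ 0)
        + (fderiv ℝ (fderiv ℝ f) (γ 0) (γ₁ 0) (γ₂ 0) + fderiv ℝ f (γ 0) (γ₃ 0))) 0 := by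
  have hf₁ (t) (ht : ContDiffAt ℝ 3 f (γ t)) : HasFDerivAt f (fderiv ℝ f (γ t)) (γ t) :=
    (ht.differentiableAt (by norm_num)).hasFDerivAt
  have hf₂ (t) (ht : ContDiffAt ℝ 3 f (γ t)) :
      HasFDerivAt (fderiv ℝ f) (fderiv ℝ (fderiv ℝ f) (γ t)) (γ t) :=
    ((ht.fderiv_right (m := 2) (by norm_num)).differentiableAt (by norm_num)).hasFDerivAt
  have hf₃ :
      HasFDerivAt (fderiv ℝ (fderiv ℝ f)) (fderiv ℝ (fderiv ℝ (fderiv ℝ f)) (γ 0)) (γ 0) :=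
    (((hf.fderiv_right (m := 2) (by norm_num)).fderiv_right (m := 1)
      (by norm_num)).differentiableAt (by norm_num)).hasFDerivAt
  have hnear : ∀ᶠ t in 𝓝 0, ContDiffAt ℝ 3 f (γ t) :=
    (hγ 0).continuousAt.eventually (hf.eventually (by simp))
  refine ⟨hnear.mono fun t ht => (hf₁ t ht).comp_hasDerivAt t (hγ t),
    hnear.mono fun t ht => ((hf₂ t ht).comp_hasDerivAt t (hγ t)).clm_apply (hγ₁ t), ?_⟩
  have hD₂ : HasDerivAt (fun s => fderiv ℝ (fderiv ℝ f) (γ s) (γ₁ s))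
      (fderiv ℝ (fderiv ℝ (fderiv ℝ f)) (γ 0) (γ₁ 0) (γ₁ 0)
        + fderiv ℝ (fderiv ℝ f) (γ 0) (γ₂ 0)) 0 :=
    (hf₃.comp_hasDerivAt (l := fderiv ℝ (fderiv ℝ f)) 0 (hγ 0)).clm_apply (hγ₁ 0)
  exact (hD₂.clm_apply (hγ₁ 0)).add
    (((hf₂ 0 hf).comp_hasDerivAt 0 (hγ 0)).clm_apply (hγ₂ 0))

end CompositeCurve

section CircleCurve

variable {E : Type*} [NormedAddCommGroup E] [NormedSpace ℝ E] (x v u : E) (t : ℝ)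

lemma hasDerivAt_line : HasDerivAt (fun s : ℝ => x + s • v) v t := by
  simpa using ((hasDerivAt_id t).smul_const v).const_add x

lemma hasDerivAt_circle :
    HasDerivAt (fun s => x + Real.sin s • v + (1 - Real.cos s) • u)
      (Real.cos t • v + Real.sin t • u) t := by
  refine ((((Real.hasDerivAt_sin t).smul_const v).const_add x).add
    (((hasDerivAt_const t 1).sub (Real.hasDerivAt_cos t)).smul_const u)).congr_deriv ?_
  simp

lemma hasDerivAt_circle_deriv :
    HasDerivAt (fun s => Real.cos s • v + Real.sin s • u)
      ((-Real.sin t) • v + Real.cos t • u) t :=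
  ((Real.hasDerivAt_cos t).smul_const v).add ((Real.hasDerivAt_sin t).smul_const u)

lemma hasDerivAt_circle_deriv_deriv :
    HasDerivAt (fun s => (-Real.sin s) • v + Real.cos s • u)
      ((-Real.cos t) • v + (-Real.sin t) • u) t :=
  ((Real.hasDerivAt_sin t).neg.smul_const v).add ((Real.hasDerivAt_cos t).smul_const u)

end CircleCurve

section FlatSpace

variable {n : ℕ}

local notation "ℝⁿ" => EuclideanSpace ℝ (Fin n)

lemma IsFlatConformalCircle.conformalCircleEq {C : Set ℝⁿ} (hC : IsFlatConformalCircle C)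
    {σ σ₁ σ₂ : ℝ → ℝⁿ} {σ₃ : ℝⁿ}
    (hσ : ∀ᶠ t in 𝓝 0, HasDerivAt σ (σ₁ t) t) (hσ₁ : ∀ᶠ t in 𝓝 0, HasDerivAt σ₁ (σ₂ t) t)
    (hσ₂ : HasDerivAt σ₂ σ₃ 0) (hmem : ∀ᶠ t in 𝓝 0, σ t ∈ C) :
    ConformalCircleEq (σ₁ 0) (σ₂ 0) σ₃ := by
  rcases hC with ⟨p, w, -, rfl⟩ | ⟨c, u₁, u₂, R, hR, h₁, h₂, h₁₂, rfl⟩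
  · have hline : ∀ᶠ t in 𝓝 0, σ t - p ∈ ℝ ∙ w := by
      filter_upwards [hmem] with t ⟨r, hr⟩
      exact Submodule.mem_span_singleton.2 ⟨r, by rw [← hr, add_sub_cancel_left]⟩
    obtain ⟨hs, ha, hj⟩ := derivs_mem_of_eventually_sub_mem _ hσ hσ₁ hσ₂ hline
    exact conformalCircleEq_of_mem_span_singleton hs ha hj
  · have hpolar : ∀ᶠ t in 𝓝 0,
        ∃ θ : ℝ, σ t - c = (R * Real.cos θ) • u₁ + (R * Real.sin θ) • u₂ := by
      filter_upwards [hmem] with t ⟨θ, hθ⟩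
      exact ⟨θ, by rw [← hθ]; simp only [add_assoc, add_sub_cancel_left]⟩
    have hplane : ∀ᶠ t in 𝓝 0, σ t - c ∈ Submodule.span ℝ {u₁, u₂} := by
      filter_upwards [hpolar] with t ⟨θ, hθ⟩
      exact Submodule.mem_span_pair.2 ⟨_, _, hθ.symm⟩
    have hsphere : ∀ᶠ t in 𝓝 0, ⟪σ t - c, σ t - c⟫ = R ^ 2 := by
      filter_upwards [hpolar] with t ⟨θ, hθ⟩
      have h₂₁ : ⟪u₂, u₁⟫ = 0 := by rw [real_inner_comm, h₁₂]
      simp only [hθ, inner_add_left, inner_add_right, real_inner_smul_left,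
        real_inner_smul_right, h₁, h₂, h₁₂, h₂₁]
      linear_combination R ^ 2 * Real.sin_sq_add_cos_sq θ
    exact conformalCircleEq_of_eventually_mem_circle (pow_ne_zero 2 hR.ne') h₁ h₂ h₁₂
      hσ hσ₁ hσ₂ hplane hsphere

lemma conformalCircleEq_of_image_subset {U : Set ℝⁿ} {f : ℝⁿ → ℝⁿ} {γ γ₁ γ₂ γ₃ : ℝ → ℝⁿ}
    (hmap : ∀ C : Set ℝⁿ, IsFlatConformalCircle C → (C ∩ U).Nonempty →
      ∃ C', IsFlatConformalCircle C' ∧ f '' (C ∩ U) ⊆ C')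
    (hγC : IsFlatConformalCircle (Set.range γ)) (hU : U ∈ 𝓝 (γ 0))
    (hf : ContDiffAt ℝ 3 f (γ 0)) (hγ : ∀ t, HasDerivAt γ (γ₁ t) t)
    (hγ₁ : ∀ t, HasDerivAt γ₁ (γ₂ t) t) (hγ₂ : ∀ t, HasDerivAt γ₂ (γ₃ t) t) :
    ConformalCircleEq (fderiv ℝ f (γ 0) (γ₁ 0))
      (fderiv ℝ (fderiv ℝ f) (γ 0) (γ₁ 0) (γ₁ 0) + fderiv ℝ f (γ 0) (γ₂ 0))
      (fderiv ℝ (fderiv ℝ (fderiv ℝ f)) (γ 0) (γ₁ 0) (γ₁ 0) (γ₁ 0)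
        + fderiv ℝ (fderiv ℝ f) (γ 0) (γ₂ 0) (γ₁ 0)
        + fderiv ℝ (fderiv ℝ f) (γ 0) (γ₁ 0) (γ₂ 0)
        + (fderiv ℝ (fderiv ℝ f) (γ 0) (γ₁ 0) (γ₂ 0) + fderiv ℝ f (γ 0) (γ₃ 0))) := by
  obtain ⟨C, hC, hfC⟩ := hmap _ hγC ⟨γ 0, ⟨0, rfl⟩, mem_of_mem_nhds hU⟩
  obtain ⟨h₁, h₂, h₃⟩ := hasDerivAt_comp_curve_of_contDiffAt hf hγ hγ₁ hγ₂
  have hmem : ∀ᶠ t in 𝓝 0, (f ∘ γ) t ∈ C := by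
    filter_upwards [(hγ 0).continuousAt.preimage_mem_nhds hU] with t ht
    exact hfC ⟨γ t, ⟨⟨t, rfl⟩, ht⟩, rfl⟩
  -- elaborated without the expected type: unifying `?σ₁ 0` against the goal is very slow
  exact (hC.conformalCircleEq h₁ h₂ h₃ hmem :)

lemma isFlatConformalCircle_range_line (x : ℝⁿ) {v : ℝⁿ} (hv : v ≠ 0) :
    IsFlatConformalCircle (Set.range fun t : ℝ => x + t • v) :=
  Or.inl ⟨x, v, hv, rfl⟩

lemma isFlatConformalCircle_range_circle (x : ℝⁿ) {v u : ℝⁿ} (hv : ⟪v, v⟫ = 1)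
    (hu : ⟪u, u⟫ = 1) (hvu : ⟪v, u⟫ = 0) :
    IsFlatConformalCircle
      (Set.range fun t : ℝ => x + Real.sin t • v + (1 - Real.cos t) • u) := by
  refine Or.inr ⟨x + u, -u, v, 1, one_pos, by rwa [inner_neg_neg], hv,
    by rw [inner_neg_left, real_inner_comm, hvu, neg_zero], ?_⟩
  congr 1
  funext t
  module

lemma inner_fderiv_eq_zero_of_orthonormal {U : Set ℝⁿ} {f : ℝⁿ → ℝⁿ} {x : ℝⁿ}
    (hmap : ∀ C : Set ℝⁿ, IsFlatConformalCircle C → (C ∩ U).Nonempty →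
      ∃ C', IsFlatConformalCircle C' ∧ f '' (C ∩ U) ⊆ C')
    (hU : U ∈ 𝓝 x) (hf : ContDiffAt ℝ 3 f x) (hinj : Function.Injective (fderiv ℝ f x))
    {v u : ℝⁿ} (hv : ‖v‖ = 1) (hu : ‖u‖ = 1) (hvu : ⟪v, u⟫ = 0) :
    ⟪fderiv ℝ f x v, fderiv ℝ f x u⟫ = 0 := by
  have hvv : ⟪v, v⟫ = 1 := by rw [real_inner_self_eq_norm_sq, hv, one_pow]
  have huu : ⟪u, u⟫ = 1 := by rw [real_inner_self_eq_norm_sq, hu, one_pow]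
  have hline := conformalCircleEq_of_image_subset hmap
    (isFlatConformalCircle_range_line x (v := v) (by rintro rfl; simp at hv))
    (by simpa using hU) (by simpa using hf) (hasDerivAt_line x v)
    (fun t => hasDerivAt_const t v) (fun t => hasDerivAt_const t 0)
  have hplus := conformalCircleEq_of_image_subset hmap
    (isFlatConformalCircle_range_circle x hvv huu hvu) (by simpa using hU) (by simpa using hf)
    (hasDerivAt_circle x v u) (hasDerivAt_circle_deriv v u) (hasDerivAt_circle_deriv_deriv v u)
  have hminus := conformalCircleEq_of_image_subset hmap
    (isFlatConformalCircle_range_circle x hvv (by rwa [inner_neg_neg])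
      (by rw [inner_neg_right, hvu, neg_zero]))
    (by simpa using hU) (by simpa using hf) (hasDerivAt_circle x v (-u))
    (hasDerivAt_circle_deriv v (-u)) (hasDerivAt_circle_deriv_deriv v (-u))
  simp only [zero_smul, add_zero, map_zero, zero_apply, Real.sin_zero, Real.cos_zero, sub_self,
    one_smul, neg_zero, zero_add, neg_smul, map_neg, smul_neg, neg_apply] at hline hplus hminus
  set A := fderiv ℝ f x
  set B := fderiv ℝ (fderiv ℝ f) x
  have key := hline.inner_smul_normalPart_eq_zero (a := A u) (e := B u v + (2 : ℝ) • B v u)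
    (by convert hplus using 2; module) (by convert hminus using 2 <;> module)
  rw [real_inner_comm]
  exact inner_eq_zero_of_smul_normalPart_eq_zero hinj (by rintro rfl; simp at hu) hvu key

theorem stmt12_general (n : ℕ)
    (U : Set (EuclideanSpace ℝ (Fin n))) (hU : IsOpen U)
    (f : EuclideanSpace ℝ (Fin n) → EuclideanSpace ℝ (Fin n))
    (hf : ContDiffOn ℝ (⊤ : ℕ∞) f U)
    (hinj : ∀ x ∈ U, Function.Injective (fderiv ℝ f x))
    (hmap : ∀ C : Set (EuclideanSpace ℝ (Fin n)), IsFlatConformalCircle C →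
      (C ∩ U).Nonempty →
      ∃ C', IsFlatConformalCircle C' ∧ f '' (C ∩ U) ⊆ C') :
    ∀ x ∈ U,
      (∀ v u : EuclideanSpace ℝ (Fin n), ⟪v, u⟫ = 0 →
        ⟪fderiv ℝ f x v, fderiv ℝ f x u⟫ = 0) ∧
      ∃ c : ℝ, 0 < c ∧ ∀ v u : EuclideanSpace ℝ (Fin n),
        ⟪fderiv ℝ f x v, fderiv ℝ f x u⟫ = c * ⟪v, u⟫ := by
  intro x hx
  have hfx : ContDiffAt ℝ 3 f x :=
    (hf.contDiffAt (hU.mem_nhds hx)).of_le (by norm_cast)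
  have horth : ∀ v u, ⟪v, u⟫ = 0 → ⟪fderiv ℝ f x v, fderiv ℝ f x u⟫ = 0 := fun v u =>
    inner_map_map_eq_zero_of_forall_norm_eq_one _ fun v u hv hu hvu =>
      inner_fderiv_eq_zero_of_orthonormal hmap (hU.mem_nhds hx) hfx (hinj x hx) hv hu hvu
  exact ⟨horth, exists_pos_inner_map_map_eq_mul_inner _ (hinj x hx) horth⟩

/-- Flat-model case of Theorem 2.1: a local diffeomorphism `f : U → ℝⁿ` (n ≥ 3) mapping
every conformal circle of the flat metric (line or round circle) into a line or round
circle has, at each point, a conformal differential: `⟨df v, df u⟩ = 0` whenever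
`⟨v,u⟩ = 0`, and indeed `⟨df v, df u⟩ = c ⟨v,u⟩` for some `c > 0`. -/
theorem stmt12 (n : ℕ) (hn : 3 ≤ n)
    (U : Set (EuclideanSpace ℝ (Fin n))) (hU : IsOpen U)
    (f : EuclideanSpace ℝ (Fin n) → EuclideanSpace ℝ (Fin n))
    (hf : ContDiffOn ℝ (⊤ : ℕ∞) f U)
    (hinj : ∀ x ∈ U, Function.Injective (fderiv ℝ f x))
    (hmap : ∀ C : Set (EuclideanSpace ℝ (Fin n)), IsFlatConformalCircle C →
      (C ∩ U).Nonempty →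
      ∃ C', IsFlatConformalCircle C' ∧ f '' (C ∩ U) ⊆ C') :
    ∀ x ∈ U,
      (∀ v u : EuclideanSpace ℝ (Fin n), ⟪v, u⟫ = 0 →
        ⟪fderiv ℝ f x v, fderiv ℝ f x u⟫ = 0) ∧
      ∃ c : ℝ, 0 < c ∧ ∀ v u : EuclideanSpace ℝ (Fin n),
        ⟪fderiv ℝ f x v, fderiv ℝ f x u⟫ = c * ⟪v, u⟫ :=
  stmt12_general n U hU f hf hinj hmap
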